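/- arXiv:2303.17082 — 2 statements merged into one kernel-verified Lean document; each statement's English description precedes it below -/
import Mathlib

section
/- Let (Ω,F,(F_t)_{t≥0},P) be a filtered probability space. Call h an elementary predictable process bounded by one if h = a_0·1_{{0}} + Σ_{i=1}^{m−1} a_i·1_{(t_i,t_{i+1}]} for some m∈ℕ and 0 < t_1 < t_2 < ⋯ < t_m < ∞, where a_0 is F_0-measurable with |a_0|≤1 and, for i=1,…,m−1, a_i is F_{t_i}-measurable with |a_i|≤1. For a real-valued process y=(y_t)_{t≥0} and such an h, set (h·y)_t = a_0·y_0 + Σ_{i=1}^{m−1} a_i·( y_{t_{i+1}∧t} − y_{t_i∧t} ). Let y^n, n∈ℕ, be real-valued processes with each y^n_t measurable and with almost surely right-continuous paths. If for every T>0 and ε>0 one has sup_h P( sup_{0≤t≤T} |(h·y^n)_t| ≥ ε ) → 0 as n→∞, where the supremum runs over all elementary predictable processes h bounded by one, then y^n converges to 0 uniformly on compacts in probability: for every T>0 and ε>0, P( sup_{0≤t≤T} |y^n_t| ≥ ε ) → 0 as n→∞. -/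
/-!
Three elementary integrands suffice. Fix times `0 < w < v < T` with `w` rational. The integrand
`1_{{0}}` has integral `y₀`, and `1_{(w,T]}` has integral `y_s - y_{w ∧ s}` on `[0, T]`. If
`|y_s| ≥ ε` for some `s ≤ T`, then `|y₀| ≥ ε/3`, or `|y_s - y_{w ∧ s}| ≥ ε/3`, or the event
`osc_v` occurs: `|y_q - y₀| ≥ ε/3` at some rational `q < v` (either `q = w`, or, when `s ≤ w`,
a rational just right of `s`, by right-continuity). Hence
`P(sup_{[0,T]} |y| ≥ ε) ≤ 2 sup_h P(sup_{[0,T]} |h·y| ≥ ε/3) + P(osc_v)`, and `P(osc_v) → 0`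
as `v → 0` because the events `osc_v` decrease to a subset of the null set where `y` is not
right-continuous at `0`. So `P(sup_{[0,T]} |yⁿ| ≥ ε) ≤ 2 sup_h P(sup_{[0,T]} |h·yⁿ| ≥ ε/3) → 0`.
-/

open MeasureTheory Filter Topology
open scoped NNReal

/-- An elementary predictable process bounded by one, relative to a filtration `𝓕`:
its data are times `0 < t 0 < t 1 < ⋯ < t k` and coefficients `a0` (`𝓕 0`-measurable)
and `a i` (`𝓕 (t i)`-measurable), all bounded by one in absolute value. The associated
process is `a0 • 1_{{0}} + ∑ i, a i • 1_{(t i, t (i+1)]}`. -/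
structure ElemPred (Ω : Type*) [mΩ : MeasurableSpace Ω]
    (𝓕 : MeasureTheory.Filtration ℝ≥0 mΩ) where
  k : ℕ
  t : Fin (k + 1) → ℝ≥0
  t_pos : 0 < t 0
  t_mono : StrictMono t
  a0 : Ω → ℝ
  a0_meas : Measurable[𝓕 0] a0
  a0_le : ∀ ω, |a0 ω| ≤ 1
  a : Fin k → Ω → ℝ
  a_meas : ∀ i, Measurable[𝓕 (t i.castSucc)] (a i)
  a_le : ∀ i ω, |a i ω| ≤ 1

/-- The elementary stochastic integral `(h · y)_s` of an elementary predictable process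
`h` against a real-valued process `y`:
`(h·y)_s = a0 y_0 + ∑ i, a i (y_{t(i+1) ∧ s} - y_{t(i) ∧ s})`. -/
def ElemPred.integral {Ω : Type*} [mΩ : MeasurableSpace Ω]
    {𝓕 : MeasureTheory.Filtration ℝ≥0 mΩ} (h : ElemPred Ω 𝓕)
    (y : ℝ≥0 → Ω → ℝ) (s : ℝ≥0) (ω : Ω) : ℝ :=
  h.a0 ω * y 0 ω +
    ∑ i : Fin h.k, h.a i ω * (y (min (h.t i.succ) s) ω - y (min (h.t i.castSucc) s) ω)

open Set
open scoped ENNReal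

theorem NNReal.exists_nnrat_btwn {x y : ℝ≥0} (h : x < y) :
    ∃ q : ℚ≥0, x < q ∧ (q : ℝ≥0) < y := by
  obtain ⟨q, hxq, hqy⟩ := exists_rat_btwn (NNReal.coe_lt_coe.mpr h)
  lift q to ℚ≥0 using (by exact_mod_cast x.coe_nonneg.trans hxq.le)
  exact ⟨q, by exact_mod_cast hxq, by exact_mod_cast hqy⟩

namespace ElemPred

variable {Ω : Type*} [mΩ : MeasurableSpace Ω]

def indicatorZero (𝓕 : Filtration ℝ≥0 mΩ) : ElemPred Ω 𝓕 where
  k := 0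
  t := fun _ => 1
  t_pos := one_pos
  t_mono := Fin.strictMono_iff_lt_succ.mpr finZeroElim
  a0 := fun _ => 1
  a0_meas := measurable_const
  a0_le := fun _ => by norm_num
  a := finZeroElim
  a_meas := finZeroElim
  a_le := finZeroElim

def indicatorIoc (𝓕 : Filtration ℝ≥0 mΩ) {u v : ℝ≥0} (hu : 0 < u) (huv : u < v) :
    ElemPred Ω 𝓕 where
  k := 1
  t := ![u, v]
  t_pos := hu
  t_mono := by simpa [Fin.strictMono_iff_lt_succ] using huv
  a0 := fun _ => 0
  a0_meas := measurable_const
  a0_le := fun _ => by norm_num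
  a := fun _ _ => 1
  a_meas := fun _ => measurable_const
  a_le := fun _ _ => by norm_num

variable {𝓕 : Filtration ℝ≥0 mΩ} (y : ℝ≥0 → Ω → ℝ) (s : ℝ≥0) (ω : Ω)

@[simp]
theorem integral_indicatorZero : (indicatorZero 𝓕).integral y s ω = y 0 ω := by
  simp [integral, indicatorZero]

@[simp]
theorem integral_indicatorIoc {u v : ℝ≥0} (hu : 0 < u) (huv : u < v) :
    (indicatorIoc 𝓕 hu huv).integral y s ω = y (min v s) ω - y (min u s) ω := by
  show 0 * y 0 ω + ∑ i : Fin 1, 1 * (y (min (![u, v] i.succ) s) ω -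
    y (min (![u, v] i.castSucc) s) ω) = _
  simp

end ElemPred

section Events

variable {Ω : Type*}

def exceedance (x : ℝ≥0 → Ω → ℝ) (T : ℝ≥0) (ε : ℝ) : Set Ω :=
  {ω | ∃ s ∈ Icc 0 T, ε ≤ |x s ω|}

/-- Only rational times are used, so that the event is a countable union of measurable sets. -/
def oscNearZero (x : ℝ≥0 → Ω → ℝ) (δ : ℝ) (v : ℝ≥0) : Set Ω :=
  {ω | ∃ q : ℚ≥0, (q : ℝ≥0) < v ∧ δ ≤ |x q ω - x 0 ω|}

variable {x : ℝ≥0 → Ω → ℝ} {δ : ℝ}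

theorem measurableSet_oscNearZero [MeasurableSpace Ω] (hx : ∀ t, Measurable (x t)) (v : ℝ≥0) :
    MeasurableSet (oscNearZero x δ v) := by
  simp_rw [oscNearZero, ofPred_exists, ofPred_and]
  exact .iUnion fun q => (MeasurableSet.const _).inter
    (measurableSet_le measurable_const ((hx _).sub (hx 0)).abs)

theorem oscNearZero_mono : Monotone (oscNearZero x δ) :=
  fun _ _ hvv' _ ⟨q, hqv, hq⟩ => ⟨q, hqv.trans_le hvv', hq⟩

theorem biInter_oscNearZero_subset (hδ : 0 < δ) :
    ⋂ v > 0, oscNearZero x δ v ⊆ {ω | ¬ContinuousWithinAt (fun s => x s ω) (Ici 0) 0} := by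
  intro ω hω hcont
  have hnear : ∀ᶠ u in 𝓝[≥] 0, |x u ω - x 0 ω| < δ := by
    simpa [Real.dist_eq] using hcont.eventually (Metric.ball_mem_nhds _ hδ)
  obtain ⟨v, hv, hvnear⟩ := mem_nhdsGE_iff_exists_Ico_subset.mp hnear
  obtain ⟨q, hqv, hq⟩ := mem_iInter₂.mp hω v hv
  exact (hvnear ⟨zero_le, hqv⟩).not_ge hq

theorem tendsto_measure_oscNearZero [MeasurableSpace Ω] (μ : Measure Ω) [IsFiniteMeasure μ]
    (hx : ∀ t, Measurable (x t))
    (hrc : ∀ᵐ ω ∂μ, ContinuousWithinAt (fun s => x s ω) (Ici 0) 0) (hδ : 0 < δ) :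
    Tendsto (fun v => μ (oscNearZero x δ v)) (𝓝[>] 0) (𝓝 0) := by
  have h := tendsto_measure_biInter_gt (μ := μ) (s := oscNearZero x δ) (a := 0)
    (fun v _ => (measurableSet_oscNearZero hx v).nullMeasurableSet)
    (fun _ _ _ h => oscNearZero_mono h) ⟨1, one_pos, measure_ne_top μ _⟩
  rwa [measure_mono_null (biInter_oscNearZero_subset hδ) (ae_iff.mp hrc)] at h

end Events

theorem le_abs_trichotomy {f : ℝ≥0 → ℝ} {ε : ℝ} {s v : ℝ≥0} {w : ℚ≥0}
    (hf : ContinuousWithinAt f (Ici s) s) (hwv : (w : ℝ≥0) < v) (hs : ε ≤ |f s|) :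
    ε / 3 ≤ |f 0| ∨ (∃ q : ℚ≥0, (q : ℝ≥0) < v ∧ ε / 3 ≤ |f q - f 0|) ∨
      ε / 3 ≤ |f s - f (min w s)| := by
  by_cases h0 : ε / 3 ≤ |f 0|
  · exact .inl h0
  by_cases hw : ε / 3 ≤ |f w - f 0|
  · exact .inr (.inl ⟨w, hwv, hw⟩)
  rw [not_le] at h0 hw
  rcases le_or_gt s w with hsw | hws
  · have hnear : ∀ᶠ u in 𝓝[>] s, |f u - f s| < ε / 3 := by
      filter_upwards [nhdsWithin_mono _ Ioi_subset_Ici_self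
        (hf.eventually (Metric.ball_mem_nhds _ ((abs_nonneg _).trans_lt h0)))] with u hu
      rwa [Real.dist_eq] at hu
    obtain ⟨u, hsu, hunear⟩ := mem_nhdsGT_iff_exists_Ioo_subset.mp hnear
    obtain ⟨q, hsq, hq⟩ := NNReal.exists_nnrat_btwn (lt_min hsu (hsw.trans_lt hwv))
    have hqs : |f q - f s| < ε / 3 := hunear ⟨hsq, hq.trans_le (min_le_left _ _)⟩
    refine .inr (.inl ⟨q, hq.trans_le (min_le_right _ _), ?_⟩)
    have := abs_sub_abs_le_abs_sub (f s) (f 0)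
    have := abs_sub_le (f s) (f q) (f 0)
    rw [abs_sub_comm] at hqs
    linarith
  · refine .inr (.inr ?_)
    rw [min_eq_left hws.le]
    have := abs_sub_abs_le_abs_sub (f s) (f w)
    have := abs_sub_le (f w) (f 0) 0
    simp only [sub_zero] at this
    linarith

section Estimate

variable {Ω : Type*} [mΩ : MeasurableSpace Ω] (μ : Measure Ω) (𝓕 : Filtration ℝ≥0 mΩ)
  {x : ℝ≥0 → Ω → ℝ}

theorem measure_exceedance_le_add_oscNearZero {T v : ℝ≥0} {w : ℚ≥0} (hw : 0 < (w : ℝ≥0))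
    (hwv : (w : ℝ≥0) < v) (hvT : v < T)
    (hrc : ∀ᵐ ω ∂μ, ∀ t, ContinuousWithinAt (fun s => x s ω) (Ici t) t) (ε : ℝ) :
    μ (exceedance x T ε) ≤
      (⨆ h : ElemPred Ω 𝓕, μ (exceedance (h.integral x) T (ε / 3))) +
        μ (oscNearZero x (ε / 3) v) +
        ⨆ h : ElemPred Ω 𝓕, μ (exceedance (h.integral x) T (ε / 3)) := by
  set A := exceedance ((ElemPred.indicatorZero 𝓕).integral x) T (ε / 3)
  set C := exceedance ((ElemPred.indicatorIoc 𝓕 hw (hwv.trans hvT)).integral x) T (ε / 3)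
  have hsub : exceedance x T ε ≤ᵐ[μ] (A ∪ oscNearZero x (ε / 3) v ∪ C : Set Ω) := by
    filter_upwards [hrc] with ω hω ⟨s, hs, hεs⟩
    rcases le_abs_trichotomy (hω s) hwv hεs with h0 | hosc | hinc
    · exact .inl (.inl ⟨0, left_mem_Icc.mpr zero_le, by simpa using h0⟩)
    · exact .inl (.inr hosc)
    · exact .inr ⟨s, hs, by simpa [min_eq_right hs.2] using hinc⟩
  calc μ (exceedance x T ε) ≤ μ (A ∪ oscNearZero x (ε / 3) v ∪ C) := measure_mono_ae hsub
    _ ≤ μ A + μ (oscNearZero x (ε / 3) v) + μ C :=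
      (measure_union_le _ _).trans (add_le_add_left (measure_union_le _ _) _)
    _ ≤ _ := by gcongr <;> exact le_iSup (fun h : ElemPred Ω 𝓕 => μ (exceedance _ T _)) _

theorem measure_exceedance_le_two_mul_iSup [IsFiniteMeasure μ] (hx : ∀ t, Measurable (x t))
    (hrc : ∀ᵐ ω ∂μ, ∀ t, ContinuousWithinAt (fun s => x s ω) (Ici t) t)
    {T : ℝ≥0} (hT : 0 < T) {ε : ℝ} (hε : 0 < ε) :
    μ (exceedance x T ε) ≤ 2 * ⨆ h : ElemPred Ω 𝓕, μ (exceedance (h.integral x) T (ε / 3)) := by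
  set G := ⨆ h : ElemPred Ω 𝓕, μ (exceedance (h.integral x) T (ε / 3))
  have hbound : ∀ᶠ v in 𝓝[>] 0, μ (exceedance x T ε) ≤ G + μ (oscNearZero x (ε / 3) v) + G := by
    filter_upwards [Ioo_mem_nhdsGT hT] with v ⟨hv, hvT⟩
    obtain ⟨w, hw, hwv⟩ := NNReal.exists_nnrat_btwn hv
    exact measure_exceedance_le_add_oscNearZero μ 𝓕 hw hwv hvT hrc ε
  have hosc := tendsto_measure_oscNearZero μ hx (hrc.mono fun _ h => h 0) (by positivity : 0 < ε / 3)
  have hlim := ge_of_tendsto ((tendsto_const_nhds.add hosc).add tendsto_const_nhds) hbound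
  rwa [add_zero, ← two_mul] at hlim

end Estimate

/-- If `sup_h P( sup_{0 ≤ s ≤ T} |(h·yⁿ)_s| ≥ ε ) → 0`, where `h` runs over
the elementary predictable processes bounded by one, then `yⁿ → 0` uniformly on compacts
in probability. -/
theorem ucp_of_elementary_integrals
    {Ω : Type*} [mΩ : MeasurableSpace Ω] (P : Measure Ω) [IsProbabilityMeasure P]
    (𝓕 : MeasureTheory.Filtration ℝ≥0 mΩ)
    (y : ℕ → ℝ≥0 → Ω → ℝ) (hymeas : ∀ n t, Measurable (y n t))
    (hyrc : ∀ n, ∀ᵐ ω ∂P, ∀ t : ℝ≥0,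
      ContinuousWithinAt (fun s => y n s ω) (Set.Ici t) t)
    (hint : ∀ T : ℝ≥0, 0 < T → ∀ ε : ℝ, 0 < ε →
      Tendsto
        (fun n => ⨆ h : ElemPred Ω 𝓕,
          P {ω | ∃ s ∈ Set.Icc (0 : ℝ≥0) T, ε ≤ |h.integral (y n) s ω|})
        atTop (𝓝 0)) :
    ∀ T : ℝ≥0, 0 < T → ∀ ε : ℝ, 0 < ε →
      Tendsto (fun n => P {ω | ∃ s ∈ Set.Icc (0 : ℝ≥0) T, ε ≤ |y n s ω|})
        atTop (𝓝 0) := by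
  intro T hT ε hε
  have hlim := ENNReal.Tendsto.const_mul (hint T hT (ε / 3) (by positivity))
    (.inr (ENNReal.ofNat_ne_top (n := 2)))
  rw [mul_zero] at hlim
  exact tendsto_of_tendsto_of_tendsto_of_le_of_le tendsto_const_nhds hlim (fun _ => zero_le)
    fun n => measure_exceedance_le_two_mul_iSup P 𝓕 (hymeas n) (hyrc n) hT hε
end

section
/- Let E be a real barrelled locally convex topological vector space and E' its topological dual endowed with the strong topology. Let (Ω,F,P) be a probability space. For each n ∈ {0,1,2,…} let η^n:Ω→E' be Borel measurable; let Z^n=(Z^n_t)_{t≥0} be an E'-valued process with each Z^n_t Borel measurable and with almost surely continuous paths in E'; let S^n:[0,∞)→L(E,E) be a family of continuous linear operators on E such that for each φ∈E the orbit map t↦S^n(t)φ is continuous; and let A^n:E→E be a continuous linear operator. For each n, φ∈E, t≥0 and ω∈Ω define Y^n(φ)_t(ω) = ⟨η^n(ω) − Z^n_0(ω), S^n(t)φ⟩ + ∫_0^t ⟨Z^n_s(ω), S^n(t−s)A^nφ⟩ ds + ⟨Z^n_t(ω), φ⟩. Assume: (1) there exists a von Neumann bounded subset K of E' such that P( η^0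 ∈ K and Z^0_0 ∈ K ) = 1, and for every T>0 there exist C>0 and a continuous seminorm ρ on E such that almost surely |⟨Z^0_t, ψ⟩| ≤ C ρ(ψ) for all t∈[0,T] and all ψ∈E; (2) for every continuous seminorm q on E' and every ε>0, P( q(η^n − η^0) ≥ ε ) → 0 as n→∞; (3) for every φ∈E, every T>0 and every continuous seminorm ρ on E: sup_{0≤t≤T} ρ( S^n(t)φ − S^0(t)φ ) → 0 and sup_{0≤s≤t≤T} ρ( S^n(t−s)A^nφ − S^0(t−s)A^0φ ) → 0 as n→∞, and moreover the sets ⋃_{n≥0}{ S^n(t)φ : 0≤t≤T } and ⋃_{n≥0}{ S^n(t−s)A^nφ : 0≤s≤t≤T } are von Neumann bounded in E; (4) for every continuous seminorm q on E', every T>0 and every ε>0, P( sup_{0≤t≤T} q( Z^n_t − Z^0_t ) ≥ ε ) → 0 as n→∞. Then for every φ∈E, the real-valued processes Y^n(φ) converge to Y^0(φ) uniformly on compacts in probability: for every T>0 and ε>0, P( sup_{0≤t≤T} | Y^n(φ)_t − Y^0(φ)_t | ≥ ε ) → 0 as n→∞. -/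
/-!
Split `Yⁿ(φ)_t − Y⁰(φ)_t` into the terms carrying `ηⁿ − η⁰` or `Zⁿ − Z⁰` and those
carrying `Sⁿ − S⁰`. The orbit points `Sⁿ(t)φ`, `Sⁿ(t−s)Aⁿφ` and `φ` form a bounded set `B`,
so `f ↦ sup_{x ∈ B} |f x|` is a continuous seminorm on the strong dual: by (2) and (4) the
first kind of terms is uniformly small outside events of vanishing probability. In the other
terms `Sⁿ − S⁰` is paired with `η⁰`, `Z⁰_0` or `Z⁰_s`; since `E` is barrelled, the bounded set
`K` of (1) is dominated by one continuous seminorm, and with the bound on `Z⁰` from (1) and the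
uniform convergence (3) these terms are small almost surely.
-/

open MeasureTheory Filter Topology Bornology Set

section SupSeminorm

variable {ι 𝕜 F : Type*} [NormedField 𝕜] [AddCommGroup F] [Module 𝕜 F]

theorem Seminorm.norm_apply_le_iSup_normSeminorm_comp {g : ι → F →ₗ[𝕜] 𝕜}
    (hg : ∀ x, BddAbove (range fun i => ‖g i x‖)) (i : ι) (x : F) :
    ‖g i x‖ ≤ (⨆ i, (normSeminorm 𝕜 𝕜).comp (g i)) x :=
  le_ciSup (f := fun i => (normSeminorm 𝕜 𝕜).comp (g i))
    (Seminorm.bddAbove_range_iff.2 hg) i x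

end SupSeminorm

section StrongDual

variable {𝕜 E : Type*} [NontriviallyNormedField 𝕜] [AddCommGroup E] [Module 𝕜 E]
  [TopologicalSpace E]

theorem Bornology.IsVonNBounded.exists_continuous_seminorm_ge_norm_eval {B : Set E}
    (hB : IsVonNBounded 𝕜 B) :
    ∃ q : Seminorm 𝕜 (E →L[𝕜] 𝕜), Continuous q ∧
      ∀ f : E →L[𝕜] 𝕜, ∀ x ∈ B, ‖f x‖ ≤ q f := by
  have hbdd : ∀ f : E →L[𝕜] 𝕜,
      BddAbove (range fun x : B => ‖(topDualPairing 𝕜 E).flip x f‖) := by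
    intro f
    obtain ⟨r, hr⟩ := (NormedSpace.isVonNBounded_iff' 𝕜).1 (hB.image f)
    exact ⟨r, forall_mem_range.2 fun x => hr _ (mem_image_of_mem f x.2)⟩
  refine ⟨_, Seminorm.continuous' (r := 1) ?_,
    fun f x hx => Seminorm.norm_apply_le_iSup_normSeminorm_comp hbdd ⟨x, hx⟩ f⟩
  filter_upwards [ContinuousLinearMap.eventually_nhds_zero_mapsTo hB
    (Metric.closedBall_mem_nhds (0 : 𝕜) one_pos)] with f hf
  rw [Seminorm.mem_closedBall_zero, Seminorm.iSup_apply (Seminorm.bddAbove_range_iff.2 hbdd)]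
  exact Real.iSup_le (fun x => mem_closedBall_zero_iff.1 (hf x.2)) zero_le_one

theorem Bornology.IsVonNBounded.exists_continuous_seminorm_ge_norm_apply
    [ContinuousSMul 𝕜 E] [BarrelledSpace 𝕜 E] {K : Set (E →L[𝕜] 𝕜)} (hK : IsVonNBounded 𝕜 K) :
    ∃ ρ : Seminorm 𝕜 E, Continuous ρ ∧ ∀ f ∈ K, ∀ x, ‖f x‖ ≤ ρ x := by
  have hbdd : ∀ x, BddAbove (range fun f : K => ‖(f : E →ₗ[𝕜] 𝕜) x‖) := by
    intro x
    obtain ⟨r, hr⟩ := (NormedSpace.isVonNBounded_iff' 𝕜).1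
      (ContinuousLinearMap.isVonNBounded_image2_apply hK (isVonNBounded_singleton x))
    exact ⟨r, forall_mem_range.2 fun f => hr _ (mem_image2_of_mem f.2 rfl)⟩
  refine ⟨_, ?_, fun f hf x => Seminorm.norm_apply_le_iSup_normSeminorm_comp hbdd ⟨f, hf⟩ x⟩
  rw [Seminorm.coe_iSup_eq (Seminorm.bddAbove_range_iff.2 hbdd)]
  exact Seminorm.continuous_iSup _ (fun f => (f : E →L[𝕜] 𝕜).continuous.norm)
    (Seminorm.bddAbove_range_iff.2 hbdd)

theorem isClosed_setOf_forall_norm_apply_le [ContinuousSMul 𝕜 E] (ρ : E → ℝ) :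
    IsClosed {f : E →L[𝕜] 𝕜 | ∀ x, ‖f x‖ ≤ ρ x} := by
  simp only [ofPred_forall]
  exact isClosed_iInter fun x => isClosed_le (continuous_eval_const x).norm continuous_const

theorem ae_forall_norm_apply_le_of_measure_eq_one [ContinuousSMul 𝕜 E] {Ω : Type*}
    [MeasurableSpace Ω] {μ : Measure Ω} [IsProbabilityMeasure μ] [MeasurableSpace (E →L[𝕜] 𝕜)]
    [OpensMeasurableSpace (E →L[𝕜] 𝕜)] {X : Ω → E →L[𝕜] 𝕜} (hX : Measurable X)
    {K : Set (E →L[𝕜] 𝕜)} {ρ : E → ℝ} (hKρ : ∀ f ∈ K, ∀ x, ‖f x‖ ≤ ρ x)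
    (hK : μ {ω | X ω ∈ K} = 1) :
    ∀ᵐ ω ∂μ, ∀ x, ‖X ω x‖ ≤ ρ x := by
  change ∀ᵐ ω ∂μ, X ω ∈ {f : E →L[𝕜] 𝕜 | ∀ x, ‖f x‖ ≤ ρ x}
  rw [ae_iff_measure_eq
    (hX (isClosed_setOf_forall_norm_apply_le ρ).measurableSet).nullMeasurableSet, measure_univ]
  exact le_antisymm prob_le_one (hK ▸ measure_mono fun ω hω => hKρ _ hω)

end StrongDual

theorem ContinuousOn.clm_apply_of_isVonNBounded {α 𝕜 E F : Type*} [TopologicalSpace α]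
    [NormedField 𝕜] [AddCommGroup E] [Module 𝕜 E] [TopologicalSpace E]
    [AddCommGroup F] [Module 𝕜 F] [TopologicalSpace F] [IsTopologicalAddGroup F]
    {Z : α → E →L[𝕜] F} {x : α → E} {s : Set α} (hZ : ContinuousOn Z s)
    (hx : ContinuousOn x s) (hB : IsVonNBounded 𝕜 (x '' s)) :
    ContinuousOn (fun u => Z u (x u)) s := by
  intro u₀ hu₀
  have hsmall : Tendsto (fun u => (Z u - Z u₀) (x u)) (𝓝[s] u₀) (𝓝 0) := by
    intro U hU
    rw [mem_map]
    have hZ₀ := tendsto_sub_nhds_zero_iff.2 (hZ u₀ hu₀)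
    filter_upwards [hZ₀.eventually (ContinuousLinearMap.eventually_nhds_zero_mapsTo hB hU),
      self_mem_nhdsWithin] with u hu hus
    exact hu (mem_image_of_mem x hus)
  have hsum := hsmall.add (((Z u₀).continuous.comp_continuousOn hx) u₀ hu₀)
  simp only [Function.comp_def, sub_apply, sub_add_cancel, zero_add] at hsum
  exact hsum

theorem abs_intervalIntegral_sub_le_of_abs_sub_le {f g : ℝ → ℝ} {a b c : ℝ} (hab : a ≤ b)
    (hf : ContinuousOn f (Icc a b)) (hg : ContinuousOn g (Icc a b))
    (hfg : ∀ s ∈ Icc a b, |f s - g s| ≤ c) :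
    |(∫ s in a..b, f s) - ∫ s in a..b, g s| ≤ c * (b - a) := by
  rw [← uIcc_of_le hab] at hf hg
  rw [← intervalIntegral.integral_sub hf.intervalIntegrable hg.intervalIntegrable,
    ← abs_of_nonneg (sub_nonneg.2 hab)]
  refine intervalIntegral.norm_integral_le_of_norm_le_const (f := fun s => f s - g s)
    fun s hs => ?_
  rw [Real.norm_eq_abs]
  exact hfg s (Ioc_subset_Icc_self (uIoc_of_le hab ▸ hs))

section WeakSolution

variable {E : Type*} [AddCommGroup E] [Module ℝ E] [TopologicalSpace E]

noncomputable def weakSolution (S : ℝ → E →L[ℝ] E) (A : E →L[ℝ] E) (η : E →L[ℝ] ℝ)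
    (z : ℝ → E →L[ℝ] ℝ) (φ : E) (t : ℝ) : ℝ :=
  (η - z 0) (S t φ) + (∫ s in (0 : ℝ)..t, z s (S (t - s) (A φ))) + z t φ

theorem continuousOn_apply_orbit_sub {S : ℝ → E →L[ℝ] E} {z : ℝ → E →L[ℝ] ℝ} {y : E} {t : ℝ}
    {B : Set E} (hz : ContinuousOn z (Ici 0)) (hS : ContinuousOn (fun u => S u y) (Ici 0))
    (hB : IsVonNBounded ℝ B) (hSB : ∀ u ∈ Icc 0 t, S (t - u) y ∈ B) :
    ContinuousOn (fun u => z u (S (t - u) y)) (Icc 0 t) :=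
  (hz.mono Icc_subset_Ici_self).clm_apply_of_isVonNBounded
    (hS.comp (continuousOn_const.sub continuousOn_id) fun _ hu => sub_nonneg.2 hu.2)
    (hB.subset (image_subset_iff.2 hSB))

theorem abs_weakSolution_sub_le {S S' : ℝ → E →L[ℝ] E} {A A' : E →L[ℝ] E}
    {η η' : E →L[ℝ] ℝ} {z z' : ℝ → E →L[ℝ] ℝ} {φ : E} {t a b : ℝ} {B : Set E}
    {q : Seminorm ℝ (E →L[ℝ] ℝ)} (ht : 0 ≤ t) (hB : IsVonNBounded ℝ B)
    (hqB : ∀ f : E →L[ℝ] ℝ, ∀ x ∈ B, |f x| ≤ q f) (hφB : φ ∈ B) (hSB : S t φ ∈ B)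
    (hSAB : ∀ u ∈ Icc 0 t, S (t - u) (A φ) ∈ B)
    (hS'A'B : ∀ u ∈ Icc 0 t, S' (t - u) (A' φ) ∈ B)
    (hz : ContinuousOn z (Ici 0)) (hz' : ContinuousOn z' (Ici 0))
    (hSA : ContinuousOn (fun u => S u (A φ)) (Ici 0))
    (hS'A' : ContinuousOn (fun u => S' u (A' φ)) (Ici 0))
    (hη : q (η - η') ≤ a) (hzz' : ∀ u ∈ Icc 0 t, q (z u - z' u) ≤ a)
    (hη'S : |η' (S t φ - S' t φ)| ≤ b) (hz'S : |z' 0 (S t φ - S' t φ)| ≤ b)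
    (hz'SA : ∀ u ∈ Icc 0 t, |z' u (S (t - u) (A φ) - S' (t - u) (A' φ))| ≤ b) :
    |weakSolution S A η z φ t - weakSolution S' A' η' z' φ t| ≤ (3 + t) * (a + b) := by
  have hzB : ∀ u ∈ Icc 0 t, ∀ x ∈ B, |(z u - z' u) x| ≤ a :=
    fun u hu x hx => (hqB _ x hx).trans (hzz' u hu)
  have hinit : |(η - z 0) (S t φ) - (η' - z' 0) (S' t φ)| ≤ 2 * a + 2 * b := by
    calc _ = |((η - η') (S t φ) - (z 0 - z' 0) (S t φ))
            + (η' (S t φ - S' t φ) - z' 0 (S t φ - S' t φ))| := by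
          congr 1; simp only [sub_apply, map_sub]; ring
      _ ≤ (|(η - η') (S t φ)| + |(z 0 - z' 0) (S t φ)|)
            + (|η' (S t φ - S' t φ)| + |z' 0 (S t φ - S' t φ)|) :=
          (abs_add_le _ _).trans (add_le_add (abs_sub _ _) (abs_sub _ _))
      _ ≤ (a + a) + (b + b) := by
          gcongr
          · exact (hqB _ _ hSB).trans hη
          · exact hzB 0 ⟨le_rfl, ht⟩ _ hSB
      _ = 2 * a + 2 * b := by ring
  have hint : |(∫ s in (0 : ℝ)..t, z s (S (t - s) (A φ)))
      - ∫ s in (0 : ℝ)..t, z' s (S' (t - s) (A' φ))| ≤ (a + b) * t := by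
    simpa using abs_intervalIntegral_sub_le_of_abs_sub_le ht
      (continuousOn_apply_orbit_sub hz hSA hB hSAB)
      (continuousOn_apply_orbit_sub hz' hS'A' hB hS'A'B) fun u hu =>
        calc _ = |(z u - z' u) (S (t - u) (A φ))
                + z' u (S (t - u) (A φ) - S' (t - u) (A' φ))| := by
              congr 1; simp only [sub_apply, map_sub]; ring
          _ ≤ a + b :=
              (abs_add_le _ _).trans (add_le_add (hzB u hu _ (hSAB u hu)) (hz'SA u hu))
  have hlast : |z t φ - z' t φ| ≤ a := hzB t ⟨ht, le_rfl⟩ φ hφB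
  have hb : 0 ≤ b := (abs_nonneg _).trans hη'S
  calc _ = |((η - z 0) (S t φ) - (η' - z' 0) (S' t φ))
          + ((∫ s in (0 : ℝ)..t, z s (S (t - s) (A φ)))
            - ∫ s in (0 : ℝ)..t, z' s (S' (t - s) (A' φ)))
          + (z t φ - z' t φ)| := by
        unfold weakSolution; congr 1; ring
    _ ≤ (2 * a + 2 * b) + (a + b) * t + a := by
        refine (abs_add_le _ _).trans (add_le_add ?_ hlast)
        exact (abs_add_le _ _).trans (add_le_add hinit hint)
    _ ≤ (3 + t) * (a + b) := by linarith

end WeakSolution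

section MeasureTendstoZero

variable {ι Ω : Type*} [MeasurableSpace Ω] {μ : Measure Ω} {l : Filter ι} {s t : ι → Set Ω}

theorem tendsto_measure_union_zero (hs : Tendsto (fun i => μ (s i)) l (𝓝 0))
    (ht : Tendsto (fun i => μ (t i)) l (𝓝 0)) :
    Tendsto (fun i => μ (s i ∪ t i)) l (𝓝 0) := by
  have hst := hs.add ht
  rw [add_zero] at hst
  exact tendsto_of_tendsto_of_tendsto_of_le_of_le tendsto_const_nhds hst (fun _ => zero_le)
    fun _ => measure_union_le _ _

theorem tendsto_measure_zero_of_eventually_ae_subset (ht : Tendsto (fun i => μ (t i)) l (𝓝 0))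
    (hst : ∀ᶠ i in l, s i ≤ᵐ[μ] t i) : Tendsto (fun i => μ (s i)) l (𝓝 0) :=
  tendsto_of_tendsto_of_tendsto_of_le_of_le' tendsto_const_nhds ht
    (Eventually.of_forall fun _ => zero_le) (hst.mono fun _ h => measure_mono_ae h)

end MeasureTendstoZero

theorem ucp_convergence_solutions_SPDE_general
    {E : Type*} [AddCommGroup E] [Module ℝ E] [TopologicalSpace E]
    [ContinuousSMul ℝ E] [BarrelledSpace ℝ E]
    {Ω : Type*} [MeasurableSpace Ω] (P : Measure Ω) [IsProbabilityMeasure P]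
    [MeasurableSpace (E →L[ℝ] ℝ)] [BorelSpace (E →L[ℝ] ℝ)]
    (η : ℕ → Ω → (E →L[ℝ] ℝ)) (hηmeas : ∀ n, Measurable (η n))
    (Z : ℕ → ℝ → Ω → (E →L[ℝ] ℝ)) (hZmeas : ∀ n t, Measurable (Z n t))
    (hZcont : ∀ n, ∀ᵐ ω ∂P, ContinuousOn (fun t => Z n t ω) (Set.Ici (0 : ℝ)))
    (S : ℕ → ℝ → (E →L[ℝ] E))
    (hSorbit : ∀ n (φ : E), ContinuousOn (fun t => S n t φ) (Set.Ici (0 : ℝ)))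
    (A : ℕ → (E →L[ℝ] E))
    (Y : ℕ → E → ℝ → Ω → ℝ)
    (hY : ∀ n (φ : E) (t : ℝ) (ω : Ω), Y n φ t ω =
      (η n ω - Z n 0 ω) (S n t φ)
        + (∫ s in (0 : ℝ)..t, (Z n s ω) (S n (t - s) (A n φ)))
        + (Z n t ω) φ)
    -- (1)
    (h1a : ∃ K : Set (E →L[ℝ] ℝ), Bornology.IsVonNBounded ℝ K ∧
      P {ω | η 0 ω ∈ K ∧ Z 0 0 ω ∈ K} = 1)
    (h1b : ∀ T : ℝ, 0 < T → ∃ C : ℝ, 0 < C ∧ ∃ ρ : Seminorm ℝ E, Continuous ρ ∧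
      ∀ᵐ ω ∂P, ∀ t ∈ Set.Icc (0 : ℝ) T, ∀ ψ : E, |(Z 0 t ω) ψ| ≤ C * ρ ψ)
    -- (2)
    (h2 : ∀ q : Seminorm ℝ (E →L[ℝ] ℝ), Continuous q → ∀ ε : ℝ, 0 < ε →
      Tendsto (fun n => P {ω | ε ≤ q (η n ω - η 0 ω)}) atTop (𝓝 0))
    -- (3)
    (h3a : ∀ (φ : E) (T : ℝ), 0 < T → ∀ ρ : Seminorm ℝ E, Continuous ρ →
      ∀ ε : ℝ, 0 < ε → ∃ N : ℕ, ∀ n ≥ N, ∀ t ∈ Set.Icc (0 : ℝ) T,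
        ρ (S n t φ - S 0 t φ) < ε)
    (h3b : ∀ (φ : E) (T : ℝ), 0 < T → ∀ ρ : Seminorm ℝ E, Continuous ρ →
      ∀ ε : ℝ, 0 < ε → ∃ N : ℕ, ∀ n ≥ N, ∀ s t : ℝ, 0 ≤ s → s ≤ t → t ≤ T →
        ρ (S n (t - s) (A n φ) - S 0 (t - s) (A 0 φ)) < ε)
    (h3c : ∀ (φ : E) (T : ℝ), 0 < T →
      Bornology.IsVonNBounded ℝ {x : E | ∃ n, ∃ t ∈ Set.Icc (0 : ℝ) T, x = S n t φ} ∧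
      Bornology.IsVonNBounded ℝ
        {x : E | ∃ n, ∃ s t : ℝ, 0 ≤ s ∧ s ≤ t ∧ t ≤ T ∧ x = S n (t - s) (A n φ)})
    -- (4)
    (h4 : ∀ q : Seminorm ℝ (E →L[ℝ] ℝ), Continuous q → ∀ T : ℝ, 0 < T →
      ∀ ε : ℝ, 0 < ε →
      Tendsto (fun n => P {ω | ∃ t ∈ Set.Icc (0 : ℝ) T, ε ≤ q (Z n t ω - Z 0 t ω)})
        atTop (𝓝 0)) :
    ∀ (φ : E) (T : ℝ), 0 < T → ∀ ε : ℝ, 0 < ε →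
      Tendsto (fun n => P {ω | ∃ t ∈ Set.Icc (0 : ℝ) T, ε ≤ |Y n φ t ω - Y 0 φ t ω|})
        atTop (𝓝 0) := by
  intro φ T hT ε hε
  obtain ⟨hB₁, hB₂⟩ := h3c φ T hT
  have hB := hB₁.union (hB₂.union (isVonNBounded_singleton φ))
  obtain ⟨q, hq, hqB⟩ := hB.exists_continuous_seminorm_ge_norm_eval
  obtain ⟨K, hK, hKP⟩ := h1a
  obtain ⟨ρK, hρK, hKρK⟩ := hK.exists_continuous_seminorm_ge_norm_apply
  obtain ⟨C, hC, ρ₀, hρ₀, hZ₀ρ₀⟩ := h1b T hT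
  set δ := ε / (4 * (3 + T))
  have hδ : 0 < δ := by positivity
  obtain ⟨N₁, hN₁⟩ := h3a φ T hT ρK hρK δ hδ
  obtain ⟨N₂, hN₂⟩ := h3b φ T hT ρ₀ hρ₀ (δ / C) (by positivity)
  have hη₀ := ae_forall_norm_apply_le_of_measure_eq_one (hηmeas 0) hKρK
    (le_antisymm prob_le_one (hKP ▸ measure_mono fun _ => And.left))
  have hZ₀₀ := ae_forall_norm_apply_le_of_measure_eq_one (hZmeas 0 0) hKρK
    (le_antisymm prob_le_one (hKP ▸ measure_mono fun _ => And.right))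
  refine tendsto_measure_zero_of_eventually_ae_subset
    (tendsto_measure_union_zero (h2 q hq δ hδ) (h4 q hq T hT δ hδ)) ?_
  filter_upwards [eventually_ge_atTop N₁, eventually_ge_atTop N₂] with n hn₁ hn₂
  filter_upwards [hη₀, hZ₀₀, hZ₀ρ₀, hZcont n, hZcont 0] with ω hη₀ω hZ₀₀ω hZ₀ω hZnω hZ0ω
  rintro ⟨t, ⟨ht₀, htT⟩, hεt⟩
  by_contra hgood
  have hη : q (η n ω - η 0 ω) < δ := not_le.1 fun h => hgood (Or.inl h)
  have hZ : ∀ u ∈ Icc 0 T, q (Z n u ω - Z 0 u ω) < δ :=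
    fun u hu => not_le.1 fun h => hgood (Or.inr ⟨u, hu, h⟩)
  simp only [Real.norm_eq_abs] at hqB hη₀ω hZ₀₀ω
  have hYn : ∀ m, Y m φ t ω = weakSolution (S m) (A m) (η m ω) (fun s => Z m s ω) φ t :=
    fun m => hY m φ t ω
  rw [hYn, hYn] at hεt
  have key := abs_weakSolution_sub_le (a := δ) (b := δ) ht₀ hB hqB (Or.inr (Or.inr rfl))
    (Or.inl ⟨n, t, ⟨ht₀, htT⟩, rfl⟩)
    (fun u hu => Or.inr (Or.inl ⟨n, u, t, hu.1, hu.2, htT, rfl⟩))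
    (fun u hu => Or.inr (Or.inl ⟨0, u, t, hu.1, hu.2, htT, rfl⟩)) hZnω hZ0ω
    (hSorbit n _) (hSorbit 0 _) hη.le (fun u hu => (hZ u ⟨hu.1, hu.2.trans htT⟩).le)
    ((hη₀ω _).trans (hN₁ n hn₁ t ⟨ht₀, htT⟩).le)
    ((hZ₀₀ω _).trans (hN₁ n hn₁ t ⟨ht₀, htT⟩).le)
    fun u hu => (hZ₀ω u ⟨hu.1, hu.2.trans htT⟩ _).trans
      ((lt_div_iff₀' hC).1 (hN₂ n hn₂ u t hu.1 hu.2 htT)).le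
  have hδε : (3 + T) * (δ + δ) = ε / 2 := by
    simp only [δ]; field_simp; ring
  have htδ : (3 + t) * (δ + δ) ≤ (3 + T) * (δ + δ) := by gcongr
  linarith

/-- ucp convergence of the (weak) solutions
`⟨Yⁿ_t, φ⟩ = ⟨ηⁿ - Zⁿ_0, Sⁿ(t)φ⟩ + ∫_0^t ⟨Zⁿ_s, Sⁿ(t-s)Aⁿφ⟩ ds + ⟨Zⁿ_t, φ⟩`
of linear stochastic evolution equations driven by semimartingale noise, under
convergence assumptions on the initial conditions `ηⁿ`, the semigroups `Sⁿ` and their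
generators `Aⁿ`, and the noises `Zⁿ`. -/
theorem ucp_convergence_solutions_SPDE
    {E : Type*} [AddCommGroup E] [Module ℝ E] [TopologicalSpace E]
    [IsTopologicalAddGroup E] [ContinuousSMul ℝ E] [LocallyConvexSpace ℝ E]
    [BarrelledSpace ℝ E]
    {Ω : Type*} [MeasurableSpace Ω] (P : Measure Ω) [IsProbabilityMeasure P]
    [MeasurableSpace (E →L[ℝ] ℝ)] [BorelSpace (E →L[ℝ] ℝ)]
    (η : ℕ → Ω → (E →L[ℝ] ℝ)) (hηmeas : ∀ n, Measurable (η n))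
    (Z : ℕ → ℝ → Ω → (E →L[ℝ] ℝ)) (hZmeas : ∀ n t, Measurable (Z n t))
    (hZcont : ∀ n, ∀ᵐ ω ∂P, ContinuousOn (fun t => Z n t ω) (Set.Ici (0 : ℝ)))
    (S : ℕ → ℝ → (E →L[ℝ] E))
    (hSorbit : ∀ n (φ : E), ContinuousOn (fun t => S n t φ) (Set.Ici (0 : ℝ)))
    (A : ℕ → (E →L[ℝ] E))
    (Y : ℕ → E → ℝ → Ω → ℝ)
    (hY : ∀ n (φ : E) (t : ℝ) (ω : Ω), Y n φ t ω =
      (η n ω - Z n 0 ω) (S n t φ)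
        + (∫ s in (0 : ℝ)..t, (Z n s ω) (S n (t - s) (A n φ)))
        + (Z n t ω) φ)
    -- (1)
    (h1a : ∃ K : Set (E →L[ℝ] ℝ), Bornology.IsVonNBounded ℝ K ∧
      P {ω | η 0 ω ∈ K ∧ Z 0 0 ω ∈ K} = 1)
    (h1b : ∀ T : ℝ, 0 < T → ∃ C : ℝ, 0 < C ∧ ∃ ρ : Seminorm ℝ E, Continuous ρ ∧
      ∀ᵐ ω ∂P, ∀ t ∈ Set.Icc (0 : ℝ) T, ∀ ψ : E, |(Z 0 t ω) ψ| ≤ C * ρ ψ)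
    -- (2)
    (h2 : ∀ q : Seminorm ℝ (E →L[ℝ] ℝ), Continuous q → ∀ ε : ℝ, 0 < ε →
      Tendsto (fun n => P {ω | ε ≤ q (η n ω - η 0 ω)}) atTop (𝓝 0))
    -- (3)
    (h3a : ∀ (φ : E) (T : ℝ), 0 < T → ∀ ρ : Seminorm ℝ E, Continuous ρ →
      ∀ ε : ℝ, 0 < ε → ∃ N : ℕ, ∀ n ≥ N, ∀ t ∈ Set.Icc (0 : ℝ) T,
        ρ (S n t φ - S 0 t φ) < ε)
    (h3b : ∀ (φ : E) (T : ℝ), 0 < T → ∀ ρ : Seminorm ℝ E, Continuous ρ →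
      ∀ ε : ℝ, 0 < ε → ∃ N : ℕ, ∀ n ≥ N, ∀ s t : ℝ, 0 ≤ s → s ≤ t → t ≤ T →
        ρ (S n (t - s) (A n φ) - S 0 (t - s) (A 0 φ)) < ε)
    (h3c : ∀ (φ : E) (T : ℝ), 0 < T →
      Bornology.IsVonNBounded ℝ {x : E | ∃ n, ∃ t ∈ Set.Icc (0 : ℝ) T, x = S n t φ} ∧
      Bornology.IsVonNBounded ℝ
        {x : E | ∃ n, ∃ s t : ℝ, 0 ≤ s ∧ s ≤ t ∧ t ≤ T ∧ x = S n (t - s) (A n φ)})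
    -- (4)
    (h4 : ∀ q : Seminorm ℝ (E →L[ℝ] ℝ), Continuous q → ∀ T : ℝ, 0 < T →
      ∀ ε : ℝ, 0 < ε →
      Tendsto (fun n => P {ω | ∃ t ∈ Set.Icc (0 : ℝ) T, ε ≤ q (Z n t ω - Z 0 t ω)})
        atTop (𝓝 0)) :
    ∀ (φ : E) (T : ℝ), 0 < T → ∀ ε : ℝ, 0 < ε →
      Tendsto (fun n => P {ω | ∃ t ∈ Set.Icc (0 : ℝ) T, ε ≤ |Y n φ t ω - Y 0 φ t ω|})
        atTop (𝓝 0) :=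
  ucp_convergence_solutions_SPDE_general P η hηmeas Z hZmeas hZcont S hSorbit A Y hY h1a h1b h2 h3a
    h3b h3c h4
end
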